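/- Let G be a connected graph, T a spanning tree, Φ a vertex, and e a single edge of G not in T. Any closed walk at Φ that traverses edges outside T exactly once, namely traversing e once, is equivalent (up to insertion/deletion of backtracks) to the standard walk β_e consisting of the tree path from Φ to the tail of e, the edge e, and the tree path from the head of e back to Φ. -/

import Mathlib

/-!
In a tree any two walks with the same endpoints are equivalent: reducing a walk one edge at a
time, each new edge either extends the current path or immediately undoes its first edge, so
every walk reduces to the unique path. The given closed walk splits at its single traversal of
`e` into a walk `Φ → u` and a walk `v → Φ`, both inside `T`, and each is therefore equivalent
to the corresponding tree walk.
-/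

open SimpleGraph

/-- Equivalence of walks under insertion/deletion of immediate backtracks. -/
inductive WalkEquiv {V : Type*} {G : SimpleGraph V} :
    ∀ {u v : V}, G.Walk u v → G.Walk u v → Prop
  | refl {u v : V} (p : G.Walk u v) : WalkEquiv p p
  | symm {u v : V} {p q : G.Walk u v} : WalkEquiv p q → WalkEquiv q p
  | trans {u v : V} {p q r : G.Walk u v} : WalkEquiv p q → WalkEquiv q r → WalkEquiv p r
  | backtrack {u w x v : V} (p : G.Walk u w) (h : G.Adj w x) (q : G.Walk w v) :
      WalkEquiv (p.append q) (p.append (Walk.cons h (Walk.cons h.symm q)))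

namespace WalkEquiv

variable {V V' : Type*} {G : SimpleGraph V} {G' : SimpleGraph V'} {a b c : V}

lemma append_right (p : G.Walk a b) {q q' : G.Walk b c} (hq : WalkEquiv q q') :
    WalkEquiv (p.append q) (p.append q') := by
  induction hq with
  | refl _ => exact .refl _
  | symm _ ih => exact .symm ih
  | trans _ _ ih₁ ih₂ => exact .trans ih₁ ih₂
  | backtrack p₀ h q₀ =>
    rw [Walk.append_assoc, Walk.append_assoc]
    exact .backtrack _ h q₀

lemma append_left {p p' : G.Walk a b} (hp : WalkEquiv p p') (q : G.Walk b c) :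
    WalkEquiv (p.append q) (p'.append q) := by
  induction hp with
  | refl _ => exact .refl _
  | symm _ ih => exact .symm (ih q)
  | trans _ _ ih₁ ih₂ => exact .trans (ih₁ q) (ih₂ q)
  | backtrack p₀ h q₀ =>
    rw [← Walk.append_assoc, ← Walk.append_assoc, Walk.cons_append, Walk.cons_append]
    exact .backtrack _ h (q₀.append q)

lemma append {p p' : G.Walk a b} {q q' : G.Walk b c} (hp : WalkEquiv p p')
    (hq : WalkEquiv q q') : WalkEquiv (p.append q) (p'.append q') :=
  (hp.append_left q).trans (append_right p' hq)

lemma cons (h : G.Adj a b) {q q' : G.Walk b c} (hq : WalkEquiv q q') :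
    WalkEquiv (Walk.cons h q) (Walk.cons h q') :=
  append_right (Walk.cons h Walk.nil) hq

lemma cons_cons_symm (h : G.Adj a b) (q : G.Walk a c) :
    WalkEquiv (Walk.cons h (Walk.cons h.symm q)) q :=
  (backtrack Walk.nil h q).symm

lemma map (f : G →g G') {p q : G.Walk a b} (hpq : WalkEquiv p q) :
    WalkEquiv (p.map f) (q.map f) := by
  induction hpq with
  | refl _ => exact .refl _
  | symm _ ih => exact .symm ih
  | trans _ _ ih₁ ih₂ => exact .trans ih₁ ih₂
  | backtrack p₀ h q₀ =>
    simp only [Walk.map_append, Walk.map_cons]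
    exact .backtrack _ (f.map_adj h) _

end WalkEquiv

namespace SimpleGraph

variable {V : Type*} {G T : SimpleGraph V}

theorem IsAcyclic.exists_isPath_walkEquiv (hG : G.IsAcyclic) {x y : V} (w : G.Walk x y) :
    ∃ r : G.Walk x y, r.IsPath ∧ WalkEquiv w r := by
  induction w with
  | nil => exact ⟨.nil, .nil, .refl _⟩
  | @cons x z y hxz w ih =>
    obtain ⟨r, hr, hwr⟩ := ih
    cases r with
    | nil => exact ⟨.cons hxz .nil, by simpa using hxz.ne, hwr.cons hxz⟩
    | @cons _ a _ hza r =>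
      obtain rfl | hax := eq_or_ne a x
      · exact ⟨r, hr.of_cons, (hwr.cons hxz).trans (.cons_cons_symm hxz r)⟩
      · have hx : x ∉ (Walk.cons hza r).support := fun hx =>
          hax (by simpa using (hG.eq_snd_of_adj_start hr hxz.symm hx).symm)
        exact ⟨.cons hxz (.cons hza r), hr.cons hx, hwr.cons hxz⟩

theorem IsAcyclic.walkEquiv (hG : G.IsAcyclic) {x y : V} (p q : G.Walk x y) : WalkEquiv p q := by
  obtain ⟨r, hr, hpr⟩ := hG.exists_isPath_walkEquiv p
  obtain ⟨s, hs, hqs⟩ := hG.exists_isPath_walkEquiv q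
  have hrs : r = s := congrArg Subtype.val ((hG.subsingleton_path x y).elim ⟨r, hr⟩ ⟨s, hs⟩)
  exact hpr.trans (hrs ▸ hqs.symm)

theorem Walk.mapLe_transfer (hle : T ≤ G) {x y : V} (w : G.Walk x y)
    (hw : ∀ e ∈ w.edges, e ∈ T.edgeSet) : (w.transfer T hw).mapLe hle = w := by
  rw [Walk.mapLe, ← Walk.transfer_eq_map_ofLE, Walk.transfer_transfer, Walk.transfer_self]
  exact fun e he => w.edges_subset_edgeSet (by rwa [Walk.edges_transfer] at he)

theorem IsAcyclic.walkEquiv_mapLe (hT : T.IsAcyclic) (hle : T ≤ G) {x y : V} (w : G.Walk x y)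
    (hw : ∀ e ∈ w.edges, e ∈ T.edgeSet) (r : T.Walk x y) : WalkEquiv w (r.mapLe hle) := by
  rw [← w.mapLe_transfer hle hw]
  exact (hT.walkEquiv _ r).map _

theorem Walk.exists_eq_append_cons_of_mem_darts {u v : V} (h : G.Adj u v) {a b : V}
    (w : G.Walk a b) (hd : ⟨(u, v), h⟩ ∈ w.darts) :
    ∃ (w₁ : G.Walk a u) (w₂ : G.Walk v b), w = w₁.append (Walk.cons h w₂) := by
  induction w with
  | nil => simp at hd
  | cons h' w ih =>
    rw [Walk.darts_cons, List.mem_cons] at hd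
    rcases hd with hd | hd
    · simp only [Dart.mk.injEq, Prod.mk.injEq] at hd
      obtain ⟨rfl, rfl⟩ := hd
      exact ⟨.nil, w, rfl⟩
    · obtain ⟨w₁, w₂, rfl⟩ := ih hd
      exact ⟨.cons h' w₁, w₂, rfl⟩

end SimpleGraph

theorem closed_walk_with_one_cotree_edge_general
    {V : Type*} [DecidableEq V] (G T : SimpleGraph V) (hle : T ≤ G)
    (hT : T.IsTree) (Φ u v : V)
    (h : G.Adj u v) (hn : ¬ T.Adj u v)
    (w : G.Walk Φ Φ)
    (hdir : ∀ d ∈ w.darts, d.edge ∉ T.edgeSet → d.toProd = (u, v))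
    (honce : w.edges.count s(u, v) = 1)
    (p : T.Walk Φ u) (q : T.Walk v Φ) :
    WalkEquiv w ((p.mapLe hle).append (Walk.cons h (q.mapLe hle))) := by
  have hcotree : ∀ e ∈ w.edges, e ∉ T.edgeSet → e = s(u, v) := by
    intro e he heT
    obtain ⟨d, hd, rfl⟩ := List.mem_map.mp he
    rw [Dart.edge, hdir d hd heT]
  have he : s(u, v) ∈ w.edges := List.count_pos_iff.mp (by omega)
  obtain ⟨d, hd, hde⟩ := List.mem_map.mp he
  have hd' : ⟨(u, v), h⟩ ∈ w.darts := by
    rwa [← Dart.ext d ⟨(u, v), h⟩ (hdir d hd (hde ▸ hn))]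
  obtain ⟨w₁, w₂, rfl⟩ := w.exists_eq_append_cons_of_mem_darts h hd'
  simp only [Walk.edges_append, Walk.edges_cons, List.count_append, List.count_cons_self]
    at honce
  have h₁ : s(u, v) ∉ w₁.edges := List.count_eq_zero.mp (by omega)
  have h₂ : s(u, v) ∉ w₂.edges := List.count_eq_zero.mp (by omega)
  have hT₁ : ∀ e ∈ w₁.edges, e ∈ T.edgeSet := fun e he =>
    not_not.mp fun heT => h₁ (hcotree e (by simp [Walk.edges_append, he]) heT ▸ he)
  have hT₂ : ∀ e ∈ w₂.edges, e ∈ T.edgeSet := fun e he =>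
    not_not.mp fun heT => h₂ (hcotree e (by simp [Walk.edges_append, he]) heT ▸ he)
  exact (hT.isAcyclic.walkEquiv_mapLe hle w₁ hT₁ p).append
    ((hT.isAcyclic.walkEquiv_mapLe hle w₂ hT₂ q).cons h)

/-- Case `n_γ = 1` of Theorem 3.1: a closed walk at `Φ` which traverses exactly one
non-tree edge `e = (u,v)`, exactly once and in the direction from `u` to `v`, is
equivalent (up to insertion/deletion of backtracks) to the standard walk `β_e`, namely
the tree path from `Φ` to `u`, the edge `e`, then the tree path from `v` back to `Φ`. -/
theorem closed_walk_with_one_cotree_edge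
    {V : Type*} [DecidableEq V] (G T : SimpleGraph V) (hle : T ≤ G)
    (hGconn : G.Connected) (hT : T.IsTree) (Φ u v : V)
    (h : G.Adj u v) (hn : ¬ T.Adj u v)
    (w : G.Walk Φ Φ)
    (hdir : ∀ d ∈ w.darts, d.edge ∉ T.edgeSet → d.toProd = (u, v))
    (honce : w.edges.count s(u, v) = 1)
    (p : T.Walk Φ u) (q : T.Walk v Φ) (hp : p.IsPath) (hq : q.IsPath) :
    WalkEquiv w ((p.mapLe hle).append (Walk.cons h (q.mapLe hle))) :=
  closed_walk_with_one_cotree_edge_general G T hle hT Φ u v h hn w hdir honce p q
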